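/- Let l ≥ 3 and n ≥ 1 be integers, and consider the l+1 weights a_0 = a_1 = … = a_{l−1} = 1 and a_l = n. Define Θ := max over subsets I ⊆ {0,…,l} with |I| ≥ 4 of (1/∏_{i∉I} a_i) · ((∑_{i∈I} a_i)/(∏_{i∈I} a_i) + (|I| − 3)). Then Θ = l − 1 + l/n, with the maximum attained at I = {0,…,l}. -/

import Mathlib

theorem stmt_5 (l n : ℕ) (hl : 3 ≤ l) (hn : 1 ≤ n)
    (a : Fin (l + 1) → ℕ)
    (ha : ∀ i, a i = if i = Fin.last l then n else 1) :
    (Finset.filter (fun I : Finset (Fin (l + 1)) => 4 ≤ I.card) Finset.univ).sup'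
      ⟨Finset.univ, by
        simp only [Finset.mem_filter, Finset.mem_univ, true_and, Finset.card_univ,
          Fintype.card_fin]
        omega⟩
      (fun I =>
        (1 / ∏ i ∈ Iᶜ, (a i : ℚ)) *
          ((∑ i ∈ I, (a i : ℚ)) / (∏ i ∈ I, (a i : ℚ)) + ((I.card : ℚ) - 3)))
      = (l : ℚ) - 1 + (l : ℚ) / (n : ℚ) ∧
    (1 / ∏ i ∈ (Finset.univ : Finset (Fin (l + 1)))ᶜ, (a i : ℚ)) *
        ((∑ i, (a i : ℚ)) / (∏ i, (a i : ℚ)) +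
          (((Finset.univ : Finset (Fin (l + 1))).card : ℚ) - 3))
      = (l : ℚ) - 1 + (l : ℚ) / (n : ℚ) := by
  have hn1 : (1:ℚ) ≤ n := by exact_mod_cast hn
  have hn0 : (0:ℚ) < n := by linarith
  have hn0' : (n:ℚ) ≠ 0 := ne_of_gt hn0
  have hl1 : (3:ℚ) ≤ l := by exact_mod_cast hl
  have hprod : ∀ I : Finset (Fin (l + 1)), ∏ i ∈ I, (a i : ℚ)
      = if Fin.last l ∈ I then (n:ℚ) else 1 := by
    intro I
    have h : ∀ i ∈ I, (a i : ℚ) = if i = Fin.last l then (n:ℚ) else 1 := by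
      intro i _; rw [ha]; split_ifs <;> simp
    rw [Finset.prod_congr rfl h, Finset.prod_ite_eq' I (Fin.last l) fun _ => (n:ℚ)]
  have hsum : ∀ I : Finset (Fin (l + 1)), ∑ i ∈ I, (a i : ℚ)
      = I.card + (if Fin.last l ∈ I then (n:ℚ) - 1 else 0) := by
    intro I
    have h : ∀ i ∈ I, (a i : ℚ) = 1 + if i = Fin.last l then (n:ℚ) - 1 else 0 := by
      intro i _; rw [ha]; split_ifs <;> simp
    rw [Finset.sum_congr rfl h, Finset.sum_add_distrib, Finset.sum_const,
      Finset.sum_ite_eq' I (Fin.last l) fun _ => (n:ℚ) - 1]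
    simp
  have huniv : (1 / ∏ i ∈ (Finset.univ : Finset (Fin (l + 1)))ᶜ, (a i : ℚ)) *
        ((∑ i, (a i : ℚ)) / (∏ i, (a i : ℚ)) +
          (((Finset.univ : Finset (Fin (l + 1))).card : ℚ) - 3))
      = (l : ℚ) - 1 + (l : ℚ) / (n : ℚ) := by
    rw [show (Finset.univ : Finset (Fin (l+1)))ᶜ = ∅ by simp, hsum Finset.univ,
      hprod Finset.univ, if_pos (Finset.mem_univ _), if_pos (Finset.mem_univ _)]
    simp only [Finset.prod_empty, Finset.card_univ, Fintype.card_fin]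
    push_cast
    field_simp
    ring
  refine ⟨le_antisymm ?_ ?_, huniv⟩
  · apply Finset.sup'_le
    intro I hI
    simp only [Finset.mem_filter, Finset.mem_univ, true_and] at hI
    have hcn : I.card ≤ l + 1 := by
      have := Finset.card_le_univ I
      simpa using this
    have hc : (I.card : ℚ) ≤ (l:ℚ) + 1 := by exact_mod_cast hcn
    rw [hsum, hprod, hprod]
    by_cases h : Fin.last l ∈ I
    · have h' : Fin.last l ∉ Iᶜ := by simp [h]
      rw [if_pos h, if_pos h, if_neg h']
      have e1 : (1:ℚ) / 1 * ((↑I.card + ((n:ℚ) - 1)) / ↑n + ((I.card : ℚ) - 3))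
          = ((I.card : ℚ) + (n - 1) + ((I.card : ℚ) - 3) * n) / n := by
        field_simp <;> ring
      have e2 : (l:ℚ) - 1 + (l:ℚ) / n = (((l:ℚ) - 1) * n + l) / n := by
        field_simp <;> ring
      rw [e1, e2, div_le_div_iff₀ hn0 hn0]
      nlinarith [mul_nonneg (by linarith : (0:ℚ) ≤ (l:ℚ) + 1 - I.card)
        (by linarith : (0:ℚ) ≤ (n:ℚ) + 1)]
    · have h' : Fin.last l ∈ Iᶜ := by simp [h]
      rw [if_neg h, if_neg h, if_pos h']
      have e1 : (1:ℚ) / n * ((↑I.card + (0:ℚ)) / 1 + ((I.card : ℚ) - 3))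
          = ((I.card : ℚ) + (I.card : ℚ) - 3) / n := by
        field_simp <;> ring
      have e2 : (l:ℚ) - 1 + (l:ℚ) / n = (((l:ℚ) - 1) * n + l) / n := by
        field_simp <;> ring
      rw [e1, e2, div_le_div_iff₀ hn0 hn0]
      nlinarith [mul_nonneg (by linarith : (0:ℚ) ≤ (l:ℚ) - 1)
        (by linarith : (0:ℚ) ≤ (n:ℚ) - 1)]
  · have hmem : (Finset.univ : Finset (Fin (l + 1))) ∈
        Finset.filter (fun I : Finset (Fin (l + 1)) => 4 ≤ I.card) Finset.univ := by
      simp only [Finset.mem_filter, Finset.mem_univ, true_and, Finset.card_univ,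
        Fintype.card_fin]
      omega
    exact le_of_eq_of_le huniv.symm
      (Finset.le_sup' (fun I : Finset (Fin (l + 1)) =>
        (1 / ∏ i ∈ Iᶜ, (a i : ℚ)) *
          ((∑ i ∈ I, (a i : ℚ)) / (∏ i ∈ I, (a i : ℚ)) + ((I.card : ℚ) - 3))) hmem)
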